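/- For any group G and any k-module X, the induced kG-module kG ⊗_k X (with G acting by left multiplication on the first factor) has finite projective dimension over kG. If moreover G is of type Φ_k, then for any k-module Y the coinduced kG-module Hom_k(kG, Y) (equivalently, the module of all functions G → Y with action (g·φ)(x) = φ(xg)) has finite projective dimension over kG. -/

import Mathlib

/-!
Background definitions.

Throughout, for a commutative ring `k` and a group `G`, the group algebra `kG` is
`MonoidAlgebra k G`, and `kG`-modules are (possibly infinitely generated) modules over
`MonoidAlgebra k G`.
-/

universe u v

open scoped TensorProduct DirectSum

/-- `M` has projective dimension at most `n` over `R` (i.e. it admits a projective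
resolution of length at most `n`). -/
def HasProjDimLE (R : Type u) [Ring R] :
    (n : ℕ) → (M : Type v) → [AddCommMonoid M] → [Module R M] → Prop
  | 0, M, _, _ => Module.Projective R M
  | n + 1, M, _, _ =>
    ∃ (P : Type v) (_ : AddCommMonoid P) (_ : Module R P) (f : P →ₗ[R] M),
      Module.Projective R P ∧ Function.Surjective f ∧
        HasProjDimLE R n (LinearMap.ker f)

/-- `M` has finite projective dimension over `R`. -/
def HasFinProjDim (R : Type u) [Ring R] (M : Type v) [AddCommMonoid M] [Module R M] : Prop :=
  ∃ n, HasProjDimLE R n M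

/-- The global dimension of `R` is at most `d` : every `R`-module has projective dimension
at most `d`. -/
def GlobalDimLE (R : Type u) [Ring R] (d : ℕ) : Prop :=
  ∀ (M : Type u) (_ : AddCommMonoid M) (_ : Module R M), HasProjDimLE R d M

section GroupAlgebra

variable (k : Type u) [CommRing k] (G : Type u) [Group G]

/-- The canonical ring homomorphism `kF → kG` induced by the inclusion of a subgroup `F ≤ G`. -/
noncomputable def subgroupInclusion (F : Subgroup G) :
    MonoidAlgebra k F →+* MonoidAlgebra k G :=
  MonoidAlgebra.mapDomainRingHom k F.subtype

/-- The restriction of a `kG`-module `M` to a `kF`-module, for a subgroup `F ≤ G`. -/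
noncomputable def restrictToSubgroup (F : Subgroup G) (M : Type u) [AddCommMonoid M]
    [Module (MonoidAlgebra k G) M] : Module (MonoidAlgebra k F) M :=
  Module.compHom M (subgroupInclusion k G F)

/-- A group `G` is of type `Φ_k` if a `kG`-module has finite projective dimension over `kG`
if and only if its restriction to every finite subgroup `F ≤ G` has finite projective
dimension over `kF`. -/
def IsTypePhi : Prop :=
  ∀ (M : Type u) (_ : AddCommMonoid M) (_ : Module (MonoidAlgebra k G) M),
    HasFinProjDim (MonoidAlgebra k G) M ↔
      ∀ (F : Subgroup G), Finite F →
        letI := restrictToSubgroup k G F M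
        HasFinProjDim (MonoidAlgebra k F) M

/-- The finitistic dimension of `kG` is at most `b` : every `kG`-module of finite projective
dimension has projective dimension at most `b`. -/
def FindimLE (b : ℕ) : Prop :=
  ∀ (M : Type u) (_ : AddCommMonoid M) (_ : Module (MonoidAlgebra k G) M),
    HasFinProjDim (MonoidAlgebra k G) M → HasProjDimLE (MonoidAlgebra k G) b M

/-- The trivial representation of `G` on `k`. -/
noncomputable abbrev trivRep : Representation k G k :=
  Representation.trivial k (G := G) (V := k)

/-- The trivial `kG`-module `k`. -/
noncomputable abbrev Triv : Type u := (trivRep k G).asModule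

/-- `kG ⊗_{kH} k`, the module induced from the trivial `kH`-module `k`, realised as the
quotient of `kG` by the left submodule generated by `{h - 1 : h ∈ H}`, i.e. by
`kG · I_H` where `I_H` is the augmentation ideal of `kH`. -/
noncomputable def IndTriv (H : Subgroup G) : Type u :=
  MonoidAlgebra k G ⧸ Submodule.span (MonoidAlgebra k G)
    {x : MonoidAlgebra k G | ∃ h ∈ H, x = MonoidAlgebra.of k G h - 1}

noncomputable instance (H : Subgroup G) : AddCommGroup (IndTriv k G H) :=
  inferInstanceAs (AddCommGroup (MonoidAlgebra k G ⧸ _))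

noncomputable instance (H : Subgroup G) : Module (MonoidAlgebra k G) (IndTriv k G H) :=
  inferInstanceAs (Module (MonoidAlgebra k G) (MonoidAlgebra k G ⧸ _))

/-- The restriction of the `kG`-module `M` to the subgroup `H ≤ G` is projective over `kH`. -/
noncomputable def RestrictionProjective (H : Subgroup G) (M : Type u) [AddCommMonoid M]
    [Module (MonoidAlgebra k G) M] : Prop :=
  letI := restrictToSubgroup k G H M
  Module.Projective (MonoidAlgebra k H) M

/-- `M` is a `kG`-lattice, i.e. `M` is projective as a `k`-module (where the `k`-module
structure is obtained by restricting scalars along `k → kG`). -/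
noncomputable def IsLatticeModule (M : Type u) [AddCommMonoid M]
    [Module (MonoidAlgebra k G) M] : Prop :=
  letI : Module k M := Module.compHom M (algebraMap k (MonoidAlgebra k G))
  Module.Projective k M

/-- `kG`, viewed as a left `kH`-module via left multiplication, for a subgroup `H ≤ G`. -/
noncomputable instance (H : Subgroup G) : Module (MonoidAlgebra k H) (MonoidAlgebra k G) :=
  Module.compHom _ (subgroupInclusion k G H)

/-- Right multiplication by `a : kG` as a `kH`-linear endomorphism of `kG`. -/
noncomputable def rightMulHom (H : Subgroup G) (a : MonoidAlgebra k G) :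
    MonoidAlgebra k G →ₗ[MonoidAlgebra k H] MonoidAlgebra k G where
  toFun x := x * a
  map_add' x y := add_mul x y a
  map_smul' b x := by
    show (subgroupInclusion k G H b * x) * a = subgroupInclusion k G H b * (x * a)
    rw [mul_assoc]

/-- The `kG`-module structure on the coinduced module `Coind^G_H N = Hom_{kH}(kG, N)`
(where `kG` is a left `kH`-module via left multiplication), given by `(a • φ) x = φ (x * a)`;
for `a = g ∈ G` this is `(g • φ) x = φ (x * g)`. -/
noncomputable instance coindModule (H : Subgroup G) (N : Type u) [AddCommGroup N]
    [Module (MonoidAlgebra k H) N] :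
    Module (MonoidAlgebra k G) (MonoidAlgebra k G →ₗ[MonoidAlgebra k H] N) where
  smul a φ := LinearMap.comp φ (rightMulHom k G H a)
  one_smul φ := LinearMap.ext fun x => by
    show φ (x * 1) = φ x
    rw [mul_one]
  mul_smul a b φ := LinearMap.ext fun x => by
    show φ (x * (a * b)) = φ ((x * a) * b)
    rw [mul_assoc]
  smul_zero a := LinearMap.ext fun x => rfl
  smul_add a φ ψ := LinearMap.ext fun x => rfl
  add_smul a b φ := LinearMap.ext fun x => by
    show φ (x * (a + b)) = φ (x * a) + φ (x * b)
    rw [mul_add, map_add]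
  zero_smul φ := LinearMap.ext fun x => by
    show φ (x * 0) = 0
    rw [mul_zero, map_zero]

/-- The representation of `G` on the `k`-module of all functions `G → Y`, with
`(g • φ) x = φ (x * g)`; this is the module coinduced from the trivial subgroup,
`Coind^G_1 Y = Hom_k(kG, Y)`. -/
noncomputable def coindTrivRep (Y : Type u) [AddCommGroup Y] [Module k Y] :
    Representation k G (G → Y) where
  toFun g :=
    { toFun := fun φ x => φ (x * g)
      map_add' := fun φ ψ => rfl
      map_smul' := fun r φ => rfl }
  map_one' := by ext φ x; simp
  map_mul' g h := by ext φ x; simp [mul_assoc]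

end GroupAlgebra

/-- `C` is a direct summand of `S` as an `R`-module. -/
def IsSummandOf (R : Type u) [Ring R] (C : Type v) (S : Type v) [AddCommMonoid C] [Module R C]
    [AddCommMonoid S] [Module R S] : Prop :=
  ∃ (i : C →ₗ[R] S) (p : S →ₗ[R] C), p.comp i = LinearMap.id

/-- An `R`-module is Gorenstein projective if it is (isomorphic to) a kernel of a
differential in a totally acyclic `ℤ`-indexed chain complex of projective `R`-modules,
i.e. an everywhere-exact complex `P_*` of projectives such that `Hom_R(P_*, Q)` is
everywhere exact for every projective `R`-module `Q`. -/
def IsGorensteinProjective (R : Type u) [Ring R] (M : Type u) [AddCommMonoid M]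
    [Module R M] : Prop :=
  ∃ (P : ℤ → Type u) (_ : ∀ i, AddCommMonoid (P i)) (_ : ∀ i, Module R (P i))
    (d : ∀ i : ℤ, P (i + 1) →ₗ[R] P i),
      (∀ i, Module.Projective R (P i)) ∧
      (∀ i : ℤ, Function.Exact (d (i + 1)) (d i)) ∧
      (∀ (Q : Type u) (_ : AddCommMonoid Q) (_ : Module R Q), Module.Projective R Q →
        ∀ i : ℤ, Function.Exact (fun f : P i →ₗ[R] Q => f.comp (d i))
          (fun f : P (i + 1) →ₗ[R] Q => f.comp (d (i + 1)))) ∧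
      ∃ i : ℤ, Nonempty (M ≃ₗ[R] LinearMap.ker (d i))

/-- `A` is an `n`-th syzygy of `M` : there is an exact sequence
`0 → A → P_{n-1} → ⋯ → P_0 → M → 0` with all `P_i` projective (for `n = 0` read `A ≅ M`). -/
def IsSyzygy (R : Type u) [Ring R] :
    (n : ℕ) → (A : Type u) → [AddCommMonoid A] → [Module R A] →
      (M : Type u) → [AddCommMonoid M] → [Module R M] → Prop
  | 0, A, _, _, M, _, _ => Nonempty (A ≃ₗ[R] M)
  | n + 1, A, _, _, M, _, _ =>
    ∃ (P : Type u) (_ : AddCommMonoid P) (_ : Module R P) (f : P →ₗ[R] M),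
      Module.Projective R P ∧ Function.Surjective f ∧ IsSyzygy R n A (LinearMap.ker f)

/-- Two `R`-modules `M` and `N` are stably isomorphic : for some `n ≥ 0` there are `n`-th
syzygies `A` of `M` and `B` of `N`, and projective modules `P`, `Q`, with `A ⊕ P ≅ B ⊕ Q`. -/
def StablyIsomorphic (R : Type u) [Ring R] (M : Type u) [AddCommMonoid M] [Module R M]
    (N : Type u) [AddCommMonoid N] [Module R N] : Prop :=
  ∃ (n : ℕ) (A B : Type u) (_ : AddCommMonoid A) (_ : Module R A)
    (_ : AddCommMonoid B) (_ : Module R B),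
      IsSyzygy R n A M ∧ IsSyzygy R n B N ∧
      ∃ (P Q : Type u) (_ : AddCommMonoid P) (_ : Module R P) (_ : AddCommMonoid Q)
        (_ : Module R Q), Module.Projective R P ∧ Module.Projective R Q ∧
          Nonempty ((A × P) ≃ₗ[R] (B × Q))

/-- A homomorphism `f : A → B` of `R`-modules is a stable isomorphism : there are a projective
module `P` and a surjection `π : P → B` such that the kernel of the combined map
`(f, π) : A ⊕ P → B` has finite projective dimension. -/
def IsStableIso (R : Type u) [Ring R] {A B : Type u} [AddCommMonoid A] [Module R A]
    [AddCommMonoid B] [Module R B] (f : A →ₗ[R] B) : Prop :=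
  ∃ (P : Type u) (_ : AddCommMonoid P) (_ : Module R P) (π : P →ₗ[R] B),
    Module.Projective R P ∧ Function.Surjective π ∧
      HasFinProjDim R (LinearMap.ker (LinearMap.coprod f π))

section Equivariant

variable {k G V W : Type u} [CommRing k] [Group G]
  [AddCommGroup V] [Module k V] [AddCommGroup W] [Module k W]

/-- A `G`-equivariant `k`-linear map between representations induces a homomorphism of the
corresponding modules over the group algebra `MonoidAlgebra k G`. -/
noncomputable def eqvToModule (ρ : Representation k G V) (σ : Representation k G W)
    (f : V →ₗ[k] W) (hf : ∀ (g : G) (v : V), f (ρ g v) = σ g (f v)) :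
    ρ.asModule →ₗ[MonoidAlgebra k G] σ.asModule where
  toFun v := f v
  map_add' := f.map_add
  map_smul' a v := by
    show f (ρ.asAlgebraHom a v) = σ.asAlgebraHom a (f v)
    induction a using MonoidAlgebra.induction_on with
    | of g => simp [Representation.asAlgebraHom_of]; exact hf g v
    | add a b ha hb =>
      simp only [map_add]
      exact (map_add f _ _).trans (congrArg₂ (· + ·) ha hb)
    | smul r a ha =>
      simp only [map_smul]
      exact (map_smul f r _).trans (congrArg (r • ·) ha)

theorem eval_equivariant (ρ : Representation k G V) (g : G) (v : V) :
    Module.Dual.eval k V (ρ g v) = ρ.dual.dual g (Module.Dual.eval k V v) := by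
  ext φ
  simp [Representation.dual_apply, Module.Dual.transpose_apply]

/-- The natural map `M → M**` as a homomorphism of `kG`-modules. -/
noncomputable def evalHomG (ρ : Representation k G V) :
    ρ.asModule →ₗ[MonoidAlgebra k G] ρ.dual.dual.asModule :=
  eqvToModule ρ ρ.dual.dual (Module.Dual.eval k V) (eval_equivariant ρ)

theorem ev_equivariant (ρ : Representation k G V) (g : G) (z : V ⊗[k] Module.Dual k V) :
    contractRight k V ((ρ.tprod ρ.dual) g z) =
      trivRep k G g (contractRight k V z) := by
  induction z using TensorProduct.induction_on with
  | zero => simp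
  | tmul m φ =>
      simp [Representation.tprod_apply, contractRight_apply,
        Representation.dual_apply, Module.Dual.transpose_apply, Representation.trivial_apply,
        ← Module.End.mul_apply, ← map_mul]
  | add x y hx hy => simp only [map_add, hx, hy]

/-- The evaluation map `ev : M ⊗_k M* → k`, `m ⊗ φ ↦ φ m`, as a homomorphism of
`kG`-modules (where `M ⊗_k M*` carries the diagonal `G`-action and `k` is trivial). -/
noncomputable def evHomG (ρ : Representation k G V) :
    (ρ.tprod ρ.dual).asModule →ₗ[MonoidAlgebra k G] Triv k G where
  toFun z := contractRight k V z
  map_add' := (contractRight k V).map_add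
  map_smul' a z := by
    show contractRight k V ((ρ.tprod ρ.dual).asAlgebraHom a z) =
      (trivRep k G).asAlgebraHom a (contractRight k V z)
    induction a using MonoidAlgebra.induction_on with
    | of g => simpa [Representation.asAlgebraHom_of] using ev_equivariant ρ g z
    | add a b ha hb =>
      simp only [map_add]
      exact (map_add (contractRight k V) _ _).trans (congrArg₂ (· + ·) ha hb)
    | smul r a ha =>
      simp only [map_smul]
      exact (map_smul (contractRight k V) r _).trans (congrArg (r • ·) ha)

theorem theta_equivariant (ρ : Representation k G V) (g : G) (z : V ⊗[k] Module.Dual k V) :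
    ((dualTensorHom k V V).comp (TensorProduct.comm k V (Module.Dual k V)).toLinearMap)
        ((ρ.tprod ρ.dual) g z) =
      (ρ.linHom ρ) g (((dualTensorHom k V V).comp
        (TensorProduct.comm k V (Module.Dual k V)).toLinearMap) z) := by
  induction z using TensorProduct.induction_on with
  | zero => simp
  | tmul m φ =>
      ext m'
      simp [Representation.tprod_apply, dualTensorHom_apply,
        Representation.dual_apply, Module.Dual.transpose_apply]
  | add x y hx hy => simp only [map_add, hx, hy]

/-- The natural map `θ_M : M ⊗_k M* → End_k M`, `θ (m ⊗ φ) m' = φ m' • m`, as a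
homomorphism of `kG`-modules (where `End_k M` carries the conjugation `G`-action). -/
noncomputable def thetaHomG (ρ : Representation k G V) :
    (ρ.tprod ρ.dual).asModule →ₗ[MonoidAlgebra k G] (ρ.linHom ρ).asModule where
  toFun z := ((dualTensorHom k V V).comp
    (TensorProduct.comm k V (Module.Dual k V)).toLinearMap) z
  map_add' x y := map_add _ x y
  map_smul' a z := by
    show ((dualTensorHom k V V).comp (TensorProduct.comm k V (Module.Dual k V)).toLinearMap)
        ((ρ.tprod ρ.dual).asAlgebraHom a z) =
      (ρ.linHom ρ).asAlgebraHom a (((dualTensorHom k V V).comp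
        (TensorProduct.comm k V (Module.Dual k V)).toLinearMap) z)
    induction a using MonoidAlgebra.induction_on with
    | of g => simpa [Representation.asAlgebraHom_of] using theta_equivariant ρ g z
    | add a b ha hb =>
      simp only [map_add]
      exact (map_add ((dualTensorHom k V V).comp (TensorProduct.comm k V (Module.Dual k V)).toLinearMap) _ _).trans (congrArg₂ (· + ·) ha hb)
    | smul r a ha =>
      simp only [map_smul]
      exact (map_smul ((dualTensorHom k V V).comp (TensorProduct.comm k V (Module.Dual k V)).toLinearMap) r _).trans (congrArg (r • ·) ha)

/-- A representation is invertible (endotrivial) if there is a `kG`-module `N` such that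
`M ⊗_k N` (with the diagonal `G`-action) is stably isomorphic to the trivial module `k`. -/
def IsInvertibleRep (ρ : Representation k G V) : Prop :=
  ∃ (W' : Type u) (_ : AddCommMonoid W') (_ : Module k W') (σ : Representation k G W'),
    StablyIsomorphic (MonoidAlgebra k G) (ρ.tprod σ).asModule (Triv k G)

end Equivariant

section MapCoeff

variable (k : Type u) [CommRing k] (l : Type u) [CommRing l] (G : Type u) [Group G]

/-- The ring homomorphism `kG → ℓG` induced by a ring homomorphism `f : k → ℓ`
(applying `f` to the coefficients). -/
noncomputable def mapCoeffRingHom (f : k →+* l) :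
    MonoidAlgebra k G →+* MonoidAlgebra l G :=
  letI : Algebra k l := f.toAlgebra
  ((MonoidAlgebra.lift k (MonoidAlgebra l G) G) (MonoidAlgebra.of l G)).toRingHom

end MapCoeff

section BaseChange

variable {k : Type u} [CommRing k] {G : Type u} [Group G]
  {V : Type u} [AddCommGroup V] [Module k V]
  (A : Type u) [CommRing A] [Algebra k A]

/-- The base change `A ⊗_k V` of a representation along `k → A`. -/
noncomputable def repBaseChange (ρ : Representation k G V) :
    Representation A G (A ⊗[k] V) where
  toFun g := LinearMap.baseChange A (ρ g)
  map_one' := by ext; simp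
  map_mul' g h := by ext; simp

end BaseChange

section AuxPD

theorem hasProjDimLE_of_equiv {R : Type u} [Ring R] (n : ℕ) :
    ∀ {M N : Type v} [AddCommMonoid M] [Module R M] [AddCommMonoid N] [Module R N],
      (M ≃ₗ[R] N) → HasProjDimLE R n M → HasProjDimLE R n N := by
  induction n with
  | zero =>
    intro M N _ _ _ _ e h
    haveI : Module.Projective R M := h
    exact Module.Projective.of_equiv e
  | succ n ih =>
    intro M N _ _ _ _ e h
    obtain ⟨P, _, _, f, hP, hf, hker⟩ := h
    refine ⟨P, _, _, e.toLinearMap.comp f, hP, e.surjective.comp hf, ?_⟩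
    have hk : LinearMap.ker f = LinearMap.ker (e.toLinearMap.comp f) := by
      rw [LinearMap.ker_comp, LinearEquiv.ker, Submodule.comap_bot]
    exact ih (LinearEquiv.ofEq _ _ hk) hker

open TensorProduct in
theorem hasProjDimLE_baseChange (k : Type u) [CommRing k] (A : Type u) [Ring A]
    [Algebra k A] [Module.Flat k A] (n : ℕ) :
    ∀ (X : Type u) [AddCommMonoid X] [Module k X],
      HasProjDimLE k n X → HasProjDimLE A n (A ⊗[k] X) := by
  induction n with
  | zero =>
    intro X _ _ h
    haveI : Module.Projective k X := h
    exact Module.Projective.tensorProduct (R := A) (R₀ := k) (M := A) (N := X)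
  | succ n ih =>
    intro X _ _ h
    obtain ⟨P, _, _, f, hP, hf, hker⟩ := h
    letI : AddCommGroup P := Module.addCommMonoidToAddCommGroup k
    letI : AddCommGroup X := Module.addCommMonoidToAddCommGroup k
    refine ⟨A ⊗[k] P, _, _, f.baseChange A, ?_, ?_, ?_⟩
    · haveI := hP
      exact Module.Projective.tensorProduct (R := A) (R₀ := k) (M := A) (N := P)
    · exact LinearMap.lTensor_surjective A hf
    · have hexact : Function.Exact ((LinearMap.ker f).subtype.baseChange A)
          (f.baseChange A) := lTensor_exact A f.exact_subtype_ker_map hf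
      have hinj : Function.Injective ((LinearMap.ker f).subtype.baseChange A) :=
        Module.Flat.lTensor_preserves_injective_linearMap _ (Submodule.injective_subtype _)
      have hrange : LinearMap.range ((LinearMap.ker f).subtype.baseChange A)
          = LinearMap.ker (f.baseChange A) := (LinearMap.exact_iff.mp hexact).symm
      exact ih (LinearMap.ker f) hker |> hasProjDimLE_of_equiv n
        ((LinearEquiv.ofInjective _ hinj).trans (LinearEquiv.ofEq _ _ hrange))

end AuxPD

section CoindAux

open TensorProduct

variable (k : Type u) [CommRing k] {G : Type u} [Group G]

/-- The element of `F` moving the chosen coset representative of `xF` to `x`. -/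
noncomputable def cosetPart (F : Subgroup G) (x : G) : F :=
  ⟨(Quotient.out (QuotientGroup.mk x : G ⧸ F))⁻¹ * x,
    QuotientGroup.eq.mp (QuotientGroup.out_eq' (QuotientGroup.mk x))⟩

theorem out_mul_cosetPart (F : Subgroup G) (x : G) :
    (Quotient.out (QuotientGroup.mk x : G ⧸ F)) * ((cosetPart F x : F) : G) = x := by
  simp [cosetPart]

theorem mk_mul_coe (F : Subgroup G) (x : G) (f : F) :
    (QuotientGroup.mk (x * (f : G)) : G ⧸ F) = QuotientGroup.mk x :=
  QuotientGroup.mk_mul_of_mem x f.2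

theorem cosetPart_mul (F : Subgroup G) (x : G) (f : F) :
    cosetPart F (x * (f : G)) = cosetPart F x * f := by
  apply Subtype.ext
  show (Quotient.out (QuotientGroup.mk (x * (f : G)) : G ⧸ F))⁻¹ * (x * (f : G))
    = ((cosetPart F x * f : F) : G)
  rw [mk_mul_coe]
  show _ = ((cosetPart F x : F) : G) * (f : G)
  rw [← mul_assoc]
  rfl

theorem mk_out_mul (F : Subgroup G) (c : G ⧸ F) (s : F) :
    (QuotientGroup.mk (Quotient.out c * (s : G)) : G ⧸ F) = c := by
  rw [mk_mul_coe, QuotientGroup.out_eq']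

theorem cosetPart_out_mul (F : Subgroup G) (c : G ⧸ F) (s : F) :
    cosetPart F (Quotient.out c * (s : G)) = s := by
  apply Subtype.ext
  show (Quotient.out (QuotientGroup.mk (Quotient.out c * (s : G)) : G ⧸ F))⁻¹
      * (Quotient.out c * (s : G)) = (s : G)
  rw [mk_out_mul, inv_mul_cancel_left]

theorem MA_add_apply {H : Type u} [Group H] (a b : MonoidAlgebra k H) (t : H) :
    (a + b).coeff t = a.coeff t + b.coeff t := Finsupp.add_apply a.coeff b.coeff t

theorem MA_smul_apply {H : Type u} [Group H] (c : k) (a : MonoidAlgebra k H) (t : H) :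
    (c • a).coeff t = c • a.coeff t := Finsupp.smul_apply c a.coeff t

variable (F : Subgroup G) (Y : Type u) [AddCommGroup Y] [Module k Y]

/-- The forward map `kF ⊗ ((G/F) → Y) → (G → Y)`. -/
noncomputable def coindPhi :
    (MonoidAlgebra k ↥F) ⊗[k] ((G ⧸ F) → Y) →ₗ[k] (G → Y) :=
  TensorProduct.lift (LinearMap.mk₂ k
    (fun (a : MonoidAlgebra k ↥F) (w : (G ⧸ F) → Y) (x : G) =>
      a.coeff (cosetPart F x)⁻¹ • w (QuotientGroup.mk x))
    (fun a b w => by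
      funext x
      simp only [Pi.add_apply]
      rw [MA_add_apply, add_smul])
    (fun c a w => by
      funext x
      simp only [Pi.smul_apply]
      rw [MA_smul_apply, smul_assoc])
    (fun a w w' => by
      funext x
      simp only [Pi.add_apply, smul_add])
    (fun c a w => by
      funext x
      simp only [Pi.smul_apply]
      rw [smul_comm]))

theorem coindPhi_tmul (a : MonoidAlgebra k ↥F) (w : (G ⧸ F) → Y) (x : G) :
    coindPhi k F Y (a ⊗ₜ[k] w) x = a.coeff (cosetPart F x)⁻¹ • w (QuotientGroup.mk x) := rfl

/-- The inverse map `(G → Y) → kF ⊗ ((G/F) → Y)`. -/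
noncomputable def coindPsi [Fintype F] :
    (G → Y) →ₗ[k] (MonoidAlgebra k ↥F) ⊗[k] ((G ⧸ F) → Y) :=
  ∑ s : F, (TensorProduct.mk k (MonoidAlgebra k ↥F) ((G ⧸ F) → Y)
      (MonoidAlgebra.single s 1)).comp
    (LinearMap.funLeft k Y (fun c : G ⧸ F => Quotient.out c * ((s : G))⁻¹))

theorem coindPhi_psi [Fintype F] (φ : G → Y) : coindPhi k F Y (coindPsi k F Y φ) = φ := by
  classical
  funext x
  rw [coindPsi, LinearMap.sum_apply, map_sum, Finset.sum_apply]
  have h1 : ∀ s : F,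
      coindPhi k F Y (((TensorProduct.mk k (MonoidAlgebra k ↥F) ((G ⧸ F) → Y)
          (MonoidAlgebra.single s 1)).comp
        (LinearMap.funLeft k Y (fun c : G ⧸ F => Quotient.out c * ((s : G))⁻¹))) φ) x
      = (if s = (cosetPart F x)⁻¹ then
          φ (Quotient.out (QuotientGroup.mk x : G ⧸ F) * ((s : G))⁻¹) else 0) := by
    intro s
    rw [LinearMap.comp_apply, TensorProduct.mk_apply, coindPhi_tmul]
    rw [MonoidAlgebra.single_apply]
    split <;> simp [LinearMap.funLeft_apply]
  rw [Finset.sum_congr rfl (fun s _ => h1 s), Finset.sum_ite_eq' Finset.univ]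
  simp [out_mul_cosetPart]

theorem coindPsi_phi [Fintype F] (z : (MonoidAlgebra k ↥F) ⊗[k] ((G ⧸ F) → Y)) :
    coindPsi k F Y (coindPhi k F Y z) = z := by
  induction z using TensorProduct.induction_on with
  | zero => simp
  | add u v hu hv => rw [map_add, map_add, hu, hv]
  | tmul a w =>
    rw [coindPsi, LinearMap.sum_apply]
    have h1 : ∀ s : F,
        ((TensorProduct.mk k (MonoidAlgebra k ↥F) ((G ⧸ F) → Y)
            (MonoidAlgebra.single s 1)).comp
          (LinearMap.funLeft k Y (fun c : G ⧸ F => Quotient.out c * ((s : G))⁻¹)))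
            (coindPhi k F Y (a ⊗ₜ[k] w))
        = MonoidAlgebra.single s (a.coeff s) ⊗ₜ[k] w := by
      intro s
      have h2 : (LinearMap.funLeft k Y (fun c : G ⧸ F => Quotient.out c * ((s : G))⁻¹))
          (coindPhi k F Y (a ⊗ₜ[k] w)) = a.coeff s • w := by
        funext c
        rw [LinearMap.funLeft_apply]
        have h3 : Quotient.out c * ((s : G))⁻¹ = Quotient.out c * ((s⁻¹ : F) : G) := by simp
        rw [h3, coindPhi_tmul, cosetPart_out_mul, inv_inv, mk_out_mul]
        rfl
      rw [LinearMap.comp_apply, h2, TensorProduct.mk_apply, TensorProduct.tmul_smul,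
        TensorProduct.smul_tmul']
      congr 1
      rw [MonoidAlgebra.smul_single', mul_one]
    rw [Finset.sum_congr rfl (fun s _ => h1 s), ← TensorProduct.sum_tmul]
    congr 1
    apply MonoidAlgebra.coeff_injective
    rw [MonoidAlgebra.coeff_sum]
    simp only [MonoidAlgebra.coeff_single]
    exact Finsupp.univ_sum_single a.coeff

theorem coindPhi_equivariant (b : MonoidAlgebra k ↥F)
    (z : (MonoidAlgebra k ↥F) ⊗[k] ((G ⧸ F) → Y)) :
    coindPhi k F Y (b • z)
      = (coindTrivRep k G Y).asAlgebraHom (subgroupInclusion k G F b) (coindPhi k F Y z) := by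
  induction b using MonoidAlgebra.induction_on with
  | of f =>
    have hincl : subgroupInclusion k G F (MonoidAlgebra.of k ↥F f)
        = MonoidAlgebra.of k G (f : G) := by
      simp [subgroupInclusion, MonoidAlgebra.mapDomainRingHom,
        MonoidAlgebra.of_apply, MonoidAlgebra.mapDomain_single]
    rw [hincl, Representation.asAlgebraHom_of]
    induction z using TensorProduct.induction_on with
    | zero => simp
    | add u v hu hv => rw [smul_add, map_add, hu, map_add, hv, map_add]
    | tmul a w =>
      have hsm : (MonoidAlgebra.of k ↥F f) • (a ⊗ₜ[k] w)
          = ((MonoidAlgebra.of k ↥F f) * a) ⊗ₜ[k] w := rfl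
      rw [hsm]
      funext x
      have hco : (coindTrivRep k G Y) (f : G) (coindPhi k F Y (a ⊗ₜ[k] w)) x
          = coindPhi k F Y (a ⊗ₜ[k] w) (x * (f : G)) := rfl
      rw [hco, coindPhi_tmul, coindPhi_tmul, MonoidAlgebra.of_apply,
        MonoidAlgebra.single_mul_apply, one_mul, cosetPart_mul, mk_mul_coe, mul_inv_rev]
  | add a b ha hb => rw [add_smul, map_add, ha, hb, map_add, map_add, LinearMap.add_apply]
  | smul r a ha =>
    have hs : subgroupInclusion k G F (r • a) = r • subgroupInclusion k G F a :=
      MonoidAlgebra.mapDomain_smul _ r a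
    rw [smul_assoc, map_smul, ha, hs, map_smul, LinearMap.smul_apply]

set_option maxHeartbeats 1000000 in
/-- The restriction to a finite subgroup `F` of the coinduced module `Hom_k(kG, Y)` is
isomorphic to the induced module `kF ⊗ ((G/F) → Y)`. -/
noncomputable def coindRestrictEquiv [Fintype F] :
    letI := restrictToSubgroup k G F (coindTrivRep k G Y).asModule
    ((MonoidAlgebra k ↥F) ⊗[k] ((G ⧸ F) → Y)) ≃ₗ[MonoidAlgebra k ↥F]
      (coindTrivRep k G Y).asModule :=
  letI := restrictToSubgroup k G F (coindTrivRep k G Y).asModule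
  { toFun := fun z => coindPhi k F Y z
    map_add' := (coindPhi k F Y).map_add
    map_smul' := fun b z => coindPhi_equivariant k F Y b z
    invFun := fun φ => coindPsi k F Y φ
    left_inv := coindPsi_phi k F Y
    right_inv := coindPhi_psi k F Y }

end CoindAux

/-- For any group `G` and any `k`-module `X`, the induced `kG`-module
`kG ⊗_k X` (with `G` acting by left multiplication on the first factor) has finite
projective dimension over `kG`.  If moreover `G` is of type `Φ_k`, then for any `k`-module
`Y` the coinduced `kG`-module `Hom_k(kG, Y)` — equivalently, the module of all functions
`G → Y` with the action `(g • φ) x = φ (x * g)` — has finite projective dimension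
over `kG`. -/
theorem induced_and_coinduced_finite_projdim
    (k : Type u) [CommRing k] [IsNoetherianRing k] (hk : ∃ d, GlobalDimLE k d)
    (G : Type u) [Group G] :
    (∀ (X : Type u) (_ : AddCommGroup X) (_ : Module k X),
      HasFinProjDim (MonoidAlgebra k G) ((MonoidAlgebra k G) ⊗[k] X)) ∧
    (IsTypePhi k G → ∀ (Y : Type u) (_ : AddCommGroup Y) (_ : Module k Y),
      HasFinProjDim (MonoidAlgebra k G) (coindTrivRep k G Y).asModule) := by
  obtain ⟨d, hd⟩ := hk
  haveI : Module.Flat k (MonoidAlgebra k G) := inferInstance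
  constructor
  · intro X _ _
    exact ⟨d, hasProjDimLE_baseChange k (MonoidAlgebra k G) d X (hd X _ _)⟩
  · intro hphi Y _ _
    refine (hphi _ _ _).mpr ?_
    intro F hF
    haveI : Fintype F := Fintype.ofFinite F
    haveI : Module.Flat k (MonoidAlgebra k ↥F) := inferInstance
    letI := restrictToSubgroup k G F (coindTrivRep k G Y).asModule
    exact ⟨d, hasProjDimLE_of_equiv d (coindRestrictEquiv k F Y)
      (hasProjDimLE_baseChange k (MonoidAlgebra k ↥F) d ((G ⧸ F) → Y) (hd _ _ _))⟩
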